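/- arXiv:1009.3608 — 2 statements merged into one kernel-verified Lean document; each statement's English description precedes it below -/
import Mathlib

section
/- Every k-regular graph with even girth g = 2r has at least 2·∑_{i=0}^{r−1}(k−1)^i vertices. -/
/-!
Root the count at an edge `ab` and let `S i` be the set of vertices at distance `i` from `a`
and `i + 1` from `b`. Two distinct paths with common ends have total length at least the
girth `2r`. Hence, for `i + 2 ≤ r`, a vertex of `S i` has at most one neighbour closer to `b`
and none at the same distance from `b`, so it has at least `k - 1` neighbours in `S (i + 1)`.
Each vertex of `S (i + 1)` has only one neighbour in `S i`. Double counting gives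
`(k - 1) ^ i ≤ #(S i)`, and the sets `S i` for `a` and for `b` with `i < r` are pairwise
disjoint.
-/

open Finset

namespace SimpleGraph

variable {V : Type*} {G : SimpleGraph V}

theorem egirth_le_length_add_length {u v : V} {p q : G.Walk u v} (hp : p.IsPath)
    (hq : q.IsPath) (hne : p ≠ q) : G.egirth ≤ p.length + q.length := by
  obtain ⟨_, _, p', q', hp', hq', hc⟩ := hp.exists_isCycle_of_ne hq hne
  calc G.egirth ≤ (p'.append q'.reverse).length := egirth_le_length hc
    _ ≤ p.length + q.length := by
      simp only [Walk.length_append, Walk.length_reverse]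
      exact_mod_cast add_le_add (Walk.length_le_of_isSubwalk hp')
        (Walk.length_le_of_isSubwalk hq')

theorem Walk.isPath_concat_of_length_eq_dist {u v w : V} {p : G.Walk u v}
    (hp : p.length = G.dist u v) (h : G.Adj v w) (hvw : G.dist u v ≤ G.dist u w) :
    (p.concat h).IsPath := by
  classical
  refine (p.isPath_of_length_eq_dist hp).concat (fun hw ↦ h.ne ?_) h
  have hsplit := congrArg Walk.length (p.take_spec hw)
  rw [Walk.length_append] at hsplit
  have : (p.dropUntil w hw).length = 0 := by
    have := G.dist_le (p.takeUntil w hw)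
    omega
  exact (Walk.eq_of_length_eq_zero this).symm

theorem eq_of_adj_of_dist_eq_of_dist_eq_succ {a w₁ w₂ z : V} {n : ℕ}
    (hg : 2 * n + 2 < G.egirth) (h₁ : G.dist a w₁ = n) (h₂ : G.dist a w₂ = n)
    (hz : G.dist a z = n + 1) (hw₁ : G.Adj w₁ z) (hw₂ : G.Adj w₂ z) : w₁ = w₂ := by
  have hr : G.Reachable a z := .of_dist_ne_zero (by omega)
  obtain ⟨p₁, hp₁⟩ := (hr.trans hw₁.symm.reachable).exists_walk_length_eq_dist
  obtain ⟨p₂, hp₂⟩ := (hr.trans hw₂.symm.reachable).exists_walk_length_eq_dist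
  by_contra hne
  have hlen := egirth_le_length_add_length
    (Walk.isPath_concat_of_length_eq_dist hp₁ hw₁ (by omega))
    (Walk.isPath_concat_of_length_eq_dist hp₂ hw₂ (by omega))
    fun he ↦ hne (Walk.concat_inj he).1
  simp only [Walk.length_concat, hp₁, hp₂, h₁, h₂] at hlen
  exact hg.not_ge (hlen.trans_eq (by push_cast; ring))

theorem dist_ne_of_adj_of_lt_egirth {u v w : V} (hr : G.Reachable u v) (h : G.Adj v w)
    (hg : 2 * G.dist u v + 1 < G.egirth) : G.dist u v ≠ G.dist u w := by
  intro hvw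
  obtain ⟨p, hp⟩ := hr.exists_walk_length_eq_dist
  obtain ⟨q, hq⟩ := (hr.trans h.reachable).exists_walk_length_eq_dist
  have hlen := egirth_le_length_add_length
    (Walk.isPath_concat_of_length_eq_dist hp h hvw.le) (q.isPath_of_length_eq_dist hq)
    fun he ↦ by simpa [hp, hq, hvw] using congrArg Walk.length he
  rw [Walk.length_concat, hp, hq, ← hvw] at hlen
  exact hg.not_ge (hlen.trans_eq (by push_cast; ring))

section Fintype

variable [Fintype V]

/-- The vertices at distance `i` from the edge `ab`, on the side of `a`. -/
noncomputable def edgeSphere (G : SimpleGraph V) (a b : V) (i : ℕ) : Finset V :=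
  {w | G.dist a w = i ∧ G.dist b w = i + 1}

variable {a b w z : V} {i k : ℕ}

@[simp]
theorem mem_edgeSphere : w ∈ G.edgeSphere a b i ↔ G.dist a w = i ∧ G.dist b w = i + 1 := by
  simp [edgeSphere]

theorem dist_eq_of_adj_of_mem_edgeSphere (hab : G.Adj a b) (hg : 2 * i + 3 < G.egirth)
    (hw : w ∈ G.edgeSphere a b i) (hwz : G.Adj w z) (hz : z ∉ G.edgeSphere a b (i + 1)) :
    G.dist b z = i := by
  rw [mem_edgeSphere] at hw hz
  have hne : G.dist b w ≠ G.dist b z := dist_ne_of_adj_of_lt_egirth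
    (.of_dist_ne_zero (by omega)) hwz (by rw [hw.2]; push_cast; convert hg using 1; ring)
  have haz : G.dist a z ≤ G.dist a w + G.dist w z := hwz.reachable.dist_triangle_right a
  have hbz : G.dist b z ≤ G.dist b a + G.dist a z := hab.symm.reachable.dist_triangle_left z
  rw [dist_eq_one_iff_adj.2 hwz] at haz
  rw [dist_eq_one_iff_adj.2 hab.symm] at hbz
  rcases hwz.diff_dist_adj (u := b) with h | h | h <;> omega

variable [DecidableRel G.Adj]

theorem card_adj_mem_edgeSphere_succ (hreg : G.IsRegularOfDegree k) (hab : G.Adj a b)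
    (hg : 2 * i + 3 < G.egirth) (hw : w ∈ G.edgeSphere a b i) :
    k - 1 ≤ #{z ∈ G.edgeSphere a b (i + 1) | G.Adj w z} := by
  classical
  have hparent : #{z ∈ G.neighborFinset w | z ∉ G.edgeSphere a b (i + 1)} ≤ 1 := by
    refine card_le_one.2 fun z₁ hz₁ z₂ hz₂ ↦ ?_
    simp only [mem_filter, mem_neighborFinset] at hz₁ hz₂
    exact eq_of_adj_of_dist_eq_of_dist_eq_succ (a := b) (n := i) (z := w)
      (lt_of_le_of_lt (by norm_cast; omega) hg)
      (dist_eq_of_adj_of_mem_edgeSphere hab hg hw hz₁.1 hz₁.2)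
      (dist_eq_of_adj_of_mem_edgeSphere hab hg hw hz₂.1 hz₂.2)
      (mem_edgeSphere.1 hw).2 hz₁.1.symm hz₂.1.symm
  have hcover : G.neighborFinset w ⊆ {z ∈ G.edgeSphere a b (i + 1) | G.Adj w z} ∪
      {z ∈ G.neighborFinset w | z ∉ G.edgeSphere a b (i + 1)} := by
    intro z hz
    rw [mem_neighborFinset] at hz
    by_cases z ∈ G.edgeSphere a b (i + 1) <;> simp_all
  have := (card_le_card hcover).trans (card_union_le _ _)
  rw [card_neighborFinset_eq_degree, hreg w] at this
  omega

theorem mul_card_edgeSphere_le (hreg : G.IsRegularOfDegree k) (hab : G.Adj a b)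
    (hg : 2 * i + 3 < G.egirth) :
    (k - 1) * #(G.edgeSphere a b i) ≤ #(G.edgeSphere a b (i + 1)) := by
  rw [mul_comm, ← mul_one #(G.edgeSphere a b (i + 1))]
  refine card_mul_le_card_mul G.Adj (fun w hw ↦ card_adj_mem_edgeSphere_succ hreg hab hg hw)
    fun z hz ↦ card_le_one.2 fun w₁ hw₁ w₂ hw₂ ↦ ?_
  simp only [mem_bipartiteBelow, mem_edgeSphere] at hw₁ hw₂ hz
  exact eq_of_adj_of_dist_eq_of_dist_eq_succ (lt_of_le_of_lt (by norm_cast; omega) hg)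
    hw₁.1.1 hw₂.1.1 hz.1 hw₁.2 hw₂.2

theorem pow_le_card_edgeSphere (hreg : G.IsRegularOfDegree k) (hab : G.Adj a b) :
    ∀ {i : ℕ}, 2 * i + 1 < G.egirth → (k - 1) ^ i ≤ #(G.edgeSphere a b i)
  | 0, _ => by simpa using ⟨a, by simp [hab.symm]⟩
  | i + 1, hg => by
    have hg' : 2 * i + 3 < G.egirth := by convert hg using 1; push_cast; ring
    calc (k - 1) ^ (i + 1) = (k - 1) * (k - 1) ^ i := pow_succ' _ _
      _ ≤ (k - 1) * #(G.edgeSphere a b i) :=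
        Nat.mul_le_mul_left _ (pow_le_card_edgeSphere hreg hab
          (lt_of_le_of_lt (by norm_cast; omega) hg'))
      _ ≤ #(G.edgeSphere a b (i + 1)) := mul_card_edgeSphere_le hreg hab hg'

theorem two_mul_sum_pow_le_card_of_adj (hreg : G.IsRegularOfDegree k) (hab : G.Adj a b)
    {r : ℕ} (hg : 2 * r ≤ G.egirth) :
    2 * ∑ i ∈ range r, (k - 1) ^ i ≤ Fintype.card V := by
  classical
  set layer : ℕ → Finset V := fun i ↦ G.edgeSphere a b i ∪ G.edgeSphere b a i
  have hdisj : ((range r : Finset ℕ) : Set ℕ).PairwiseDisjoint layer := by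
    intro i _ j _ hij
    refine Finset.disjoint_left.2 fun w hi hj ↦ ?_
    simp only [layer, mem_union, mem_edgeSphere] at hi hj
    omega
  calc 2 * ∑ i ∈ range r, (k - 1) ^ i = ∑ i ∈ range r, ((k - 1) ^ i + (k - 1) ^ i) := by
        rw [mul_sum]; simp only [two_mul]
    _ ≤ ∑ i ∈ range r, #(layer i) := sum_le_sum fun i hi ↦ by
        have hg' : 2 * i + 1 < G.egirth :=
          lt_of_lt_of_le (by rw [mem_range] at hi; norm_cast; omega) hg
        rw [card_union_of_disjoint (Finset.disjoint_left.2 fun w h₁ h₂ ↦ by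
          simp only [mem_edgeSphere] at h₁ h₂; omega)]
        exact add_le_add (pow_le_card_edgeSphere hreg hab hg')
          (pow_le_card_edgeSphere hreg hab.symm hg')
    _ = #((range r).biUnion layer) := (card_biUnion hdisj).symm
    _ ≤ Fintype.card V := card_le_univ _

end Fintype

end SimpleGraph

/-- Moore bound for even girth: every `k`-regular graph with girth `2r` has at least
`2·∑_{i=0}^{r-1}(k-1)^i` vertices. -/
theorem moore_bound_even_girth {V : Type*} [Fintype V] (G : SimpleGraph V)
    [DecidableRel G.Adj] (k r : ℕ)
    (hreg : G.IsRegularOfDegree k) (hg : G.egirth = 2 * r) :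
    2 * ∑ i ∈ Finset.range r, (k - 1) ^ i ≤ Fintype.card V := by
  obtain ⟨a, c, hc, -⟩ := SimpleGraph.exists_egirth_eq_length.2 fun h ↦
    ENat.natCast_ne_top (2 * r) (by rw [← h.egirth_eq_top, hg]; push_cast; rfl)
  exact SimpleGraph.two_mul_sum_pow_le_card_of_adj hreg (c.adj_snd hc.not_nil) hg.ge
end

section
/- The explicit 67-vertex graph given by the adjacency list in the paper has girth exactly 7 (it has girth at least 7 and contains a 7-cycle). -/
/-- The 134 edges (as ordered pairs of natural numbers, lower endpoint first) of the
67-vertex graph given by the adjacency list in the paper. -/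
def cage47Edges : List (ℕ × ℕ) := [
  (0, 1), (0, 2), (0, 3), (0, 4), (1, 5), (1, 6), (1, 7), (2, 8), (2, 9), (2, 10), (3, 11),
  (3, 12), (3, 13), (4, 14), (4, 15), (4, 16), (5, 17), (5, 18), (5, 19), (6, 20), (6, 21),
  (6, 22), (7, 23), (7, 24), (7, 25), (8, 26), (8, 27), (8, 28), (9, 29), (9, 30), (9, 31),
  (10, 32), (10, 33), (10, 34), (11, 35), (11, 36), (11, 37), (12, 38), (12, 39), (12, 40),
  (13, 41), (13, 42), (13, 43), (14, 44), (14, 45), (14, 46), (15, 47), (15, 48), (15, 49),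
  (16, 50), (16, 51), (16, 52), (17, 33), (17, 37), (17, 57), (18, 28), (18, 41), (18, 60),
  (19, 30), (19, 38), (19, 48), (20, 31), (20, 35), (20, 66), (21, 32), (21, 42), (21, 52),
  (22, 27), (22, 39), (22, 54), (23, 29), (23, 43), (23, 61), (24, 26), (24, 36), (24, 46),
  (25, 34), (25, 40), (25, 63), (26, 47), (26, 53), (27, 43), (27, 45), (28, 52), (28, 56),
  (29, 49), (29, 59), (30, 51), (30, 62), (31, 46), (31, 57), (32, 44), (32, 65), (33, 50),
  (33, 55), (34, 48), (34, 64), (35, 48), (35, 56), (36, 51), (36, 65), (37, 45), (37, 59),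
  (38, 44), (38, 53), (39, 49), (39, 55), (40, 52), (40, 57), (41, 46), (41, 64), (42, 47),
  (42, 62), (43, 50), (44, 61), (45, 63), (47, 58), (49, 65), (50, 66), (51, 54), (53, 59),
  (53, 66), (54, 58), (54, 64), (55, 56), (55, 62), (56, 61), (57, 58), (58, 61), (59, 64),
  (60, 63), (60, 65), (60, 66), (62, 63) ]

/-- The 67-vertex graph given by the adjacency list in the paper. -/
def cage47 : SimpleGraph (Fin 67) :=
  SimpleGraph.fromRel (fun v w => ((v : ℕ), (w : ℕ)) ∈ cage47Edges)

instance : DecidableRel cage47.Adj := fun v w =>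
  decidable_of_iff
    (v ≠ w ∧ (((v : ℕ), (w : ℕ)) ∈ cage47Edges ∨ ((w : ℕ), (v : ℕ)) ∈ cage47Edges))
    (by rw [cage47, SimpleGraph.fromRel_adj])

/-!
Every cycle can be rotated to start at its least vertex `v`, so it has no short cycle as soon as,
for every `v`, a depth-first search from `v` of depth 6 through vertices larger than `v` never
returns to `v` along a path with at least three vertices. The kernel runs these 67 searches.
The cycle 0 - 1 - 5 - 17 - 33 - 10 - 2 - 0 shows that the girth is not larger than 7.
-/

namespace SimpleGraph

theorem Walk.IsCycle.support_eq {V : Type*} {G : SimpleGraph V} {u : V} {c : G.Walk u u}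
    (hc : c.IsCycle) : c.support = u :: c.support.tail.dropLast ++ [u] := by
  have hne : c.support.tail ≠ [] := List.ne_nil_of_length_pos <| by
    simp only [List.length_tail, c.length_support]
    exact Nat.lt_of_lt_of_le (by decide) hc.three_le_length
  conv_lhs => rw [← c.cons_tail_support, ← List.dropLast_concat_getLast hne]
  simp [c.getLast_support]

variable {V : Type*} [LinearOrder V]

/-- `noShortCycleAt nbr v₀ fuel cur seen` is `false` iff the path `seen` from `v₀` to `cur`
(stored in reverse, so `cur` is its head) extends along `nbr`, through new vertices larger than
`v₀`, to a path of at least three vertices closing up to a cycle at `v₀`, using at most `fuel`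
more edges. -/
def noShortCycleAt (nbr : V → List V) (v₀ : V) : ℕ → V → List V → Bool
  | 0, _, _ => true
  | fuel + 1, cur, seen =>
    (nbr cur).all fun x =>
      if x = v₀ then decide (seen.length < 3)
      else decide (x < v₀) || decide (x ∈ seen) || noShortCycleAt nbr v₀ fuel x (x :: seen)

theorem noShortCycleAt_eq_false {nbr : V → List V} {v₀ : V} :
    ∀ (rest : List V) {fuel : ℕ} {cur : V} {seen : List V},
      rest.length < fuel → (cur :: rest ++ [v₀]).IsChain (fun a b => b ∈ nbr a) →
      (∀ x ∈ rest, v₀ < x ∧ x ∉ seen) → rest.Nodup → 3 ≤ seen.length + rest.length →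
      noShortCycleAt nbr v₀ fuel cur seen = false
  | [], fuel + 1, cur, seen, _, hchain, _, _, hthree => by
    simp only [noShortCycleAt, List.all_eq_false]
    exact ⟨v₀, List.isChain_pair.1 hchain, by simpa using hthree⟩
  | x :: rest, fuel + 1, cur, seen, hlen, hchain, hgt, hnd, hthree => by
    obtain ⟨hx, hchain⟩ := List.isChain_cons_cons.1 hchain
    obtain ⟨hv₀x, hxseen⟩ := hgt x List.mem_cons_self
    obtain ⟨hxrest, hnd⟩ := List.nodup_cons.1 hnd
    have hrec : noShortCycleAt nbr v₀ fuel x (x :: seen) = false :=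
      noShortCycleAt_eq_false rest (by simp at hlen; omega) hchain
        (fun y hy => ⟨(hgt y (.tail _ hy)).1, by
          simpa [not_or] using ⟨fun h => hxrest (h ▸ hy), (hgt y (.tail _ hy)).2⟩⟩)
        hnd (by simp at hthree ⊢; omega)
    simp only [noShortCycleAt, List.all_eq_false]
    exact ⟨x, hx, by simp [hv₀x.ne', hv₀x.not_gt, hxseen, hrec]⟩

variable {G : SimpleGraph V}

theorem Walk.IsCycle.exists_isCycle_base_le {u : V} {w : G.Walk u u} (hw : w.IsCycle) :
    ∃ (v : V) (c : G.Walk v v), c.IsCycle ∧ c.length = w.length ∧ ∀ x ∈ c.support, v ≤ x := by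
  obtain ⟨v, hv, hmin⟩ := w.support.toFinset.exists_min_image id ⟨u, by simp⟩
  rw [List.mem_toFinset] at hv
  exact ⟨v, w.rotate v hv, hw.rotate hv, w.length_rotate v hv,
    fun x hx => hmin x (by simpa using hx)⟩

theorem le_egirth_of_noShortCycleAt (nbr : V → List V) (hnbr : ∀ ⦃v w⦄, G.Adj v w → w ∈ nbr v)
    (fuel : ℕ) (hsearch : ∀ v, noShortCycleAt nbr v fuel v [v] = true) :
    ((fuel + 1 : ℕ) : ℕ∞) ≤ G.egirth := by
  refine le_egirth.2 fun u w hw => ?_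
  by_contra! hlt
  obtain ⟨v, c, hc, hlen, hmin⟩ := hw.exists_isCycle_base_le
  set rest := c.support.tail.dropLast
  have hsupp : c.support = v :: rest ++ [v] := hc.support_eq
  obtain ⟨hvrest, hnd⟩ : v ∉ rest ∧ rest.Nodup := by
    simpa [hsupp, List.nodup_append_comm] using hc.support_nodup
  have hrest : rest.length + 1 = c.length := by simpa [hsupp] using c.length_support
  have hchain : (v :: rest ++ [v]).IsChain (fun a b => b ∈ nbr a) :=
    hsupp ▸ c.isChain_adj_support.imp hnbr
  have hgt : ∀ x ∈ rest, v < x ∧ x ∉ [v] := fun x hx =>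
    have hxv : x ≠ v := fun h => hvrest (h ▸ hx)
    ⟨(hmin x (by simp [hsupp, hx])).lt_of_ne' hxv, by simpa using hxv⟩
  have hshort : rest.length < fuel := by
    have : w.length < fuel + 1 := by exact_mod_cast hlt
    omega
  have hthree : 3 ≤ [v].length + rest.length := by
    have := hc.three_le_length
    simp only [List.length_singleton]
    omega
  simpa [hsearch v] using noShortCycleAt_eq_false rest hshort hchain hgt hnd hthree

end SimpleGraph

open SimpleGraph

def cage47Nbrs (v : Fin 67) : List (Fin 67) :=
  cage47Edges.filterMap fun e =>
    if e.1 = (v : ℕ) then some (Fin.ofNat 67 e.2)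
    else if e.2 = (v : ℕ) then some (Fin.ofNat 67 e.1)
    else none

theorem cage47_adj_mem_nbrs ⦃v w : Fin 67⦄ (h : cage47.Adj v w) : w ∈ cage47Nbrs v := by
  rw [cage47, fromRel_adj] at h
  obtain ⟨hne, hvw | hwv⟩ := h
  · exact List.mem_filterMap.2 ⟨_, hvw, by simp⟩
  · exact List.mem_filterMap.2 ⟨_, hwv, by simp [Fin.val_ne_of_ne hne.symm]⟩

theorem cage47_noShortCycleAt : ∀ v, noShortCycleAt cage47Nbrs v 6 v [v] = true := by
  decide +kernel

def cage47Heptagon : cage47.Walk 0 0 :=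
  .cons (show cage47.Adj 0 1 by decide) <| .cons (show cage47.Adj 1 5 by decide) <|
    .cons (show cage47.Adj 5 17 by decide) <| .cons (show cage47.Adj 17 33 by decide) <|
    .cons (show cage47.Adj 33 10 by decide) <| .cons (show cage47.Adj 10 2 by decide) <|
    .cons (show cage47.Adj 2 0 by decide) .nil

theorem cage47Heptagon_isCycle : cage47Heptagon.IsCycle :=
  (Walk.cons_isCycle_iff _ _).2 ⟨(Walk.isPath_def _).2 (by decide), by decide⟩

/-- The explicit 67-vertex graph given by the adjacency list in the paper has girth
exactly 7. -/
theorem cage47_girth : cage47.egirth = 7 :=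
  le_antisymm (egirth_le_length cage47Heptagon_isCycle)
    (le_egirth_of_noShortCycleAt _ cage47_adj_mem_nbrs 6 cage47_noShortCycleAt)
end
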